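/- Let a > 0 and β > 0, define errfn(z) := (1/(2π)) ∫_{-∞}^z e^{-ξ²} dξ and e_{a,β}(y,t) := errfn((y + a t)/√(4βt)) - errfn((y - a t)/√(4βt)). Then for each fixed y ∈ ℝ, e_{a,β}(y,t) → 1/(2√π) as t → ∞, and there exist C > 0 and M > 0 such that for all y ≤ 0 and all t ≥ 1, |e_{a,β}(y,t) - 1/(2√π)| ≤ C errfn((|y| - a t)/(M √t)). -/

import Mathlib

open MeasureTheory Real Set Filter

/-- The error function `errfn(z) = (1/(2π)) ∫_{-∞}^z e^{-ξ²} dξ`. -/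
noncomputable def errfn (z : ℝ) : ℝ := (1 / (2 * Real.pi)) * ∫ ξ in Iic z, Real.exp (-ξ^2)

/-- The scattered error-function kernel
`e_{a,β}(y,t) = errfn((y+at)/√(4βt)) - errfn((y-at)/√(4βt))`. -/
noncomputable def eKernel (a β y t : ℝ) : ℝ :=
  errfn ((y + a * t) / Real.sqrt (4 * β * t)) - errfn ((y - a * t) / Real.sqrt (4 * β * t))

/-!
`errfn` is `1/(2π)` times the cumulative Gaussian mass, so it increases from `0` to
`(1/(2π)) √π = 1/(2√π)`, and `errfn z + errfn (-z) = 1/(2√π)` by the symmetry of `e^{-ξ²}`.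
Since `(y ± at)/√(4βt) → ±∞`, the kernel tends to `1/(2√π) - 0`. Its defect from the limit
is `errfn (-(y+at)/√(4βt)) + errfn ((y-at)/√(4βt))`, and for `y ≤ 0` both arguments are at most
`(|y| - at)/√(4βt)`, giving the bound with `C = 2` and `M = 2√β`.
-/

lemma integrable_exp_neg_sq : Integrable (fun ξ : ℝ => exp (-ξ ^ 2)) := by
  simpa using integrable_exp_neg_mul_sq one_pos

lemma integral_exp_neg_sq : ∫ ξ : ℝ, exp (-ξ ^ 2) = √π := by
  simpa using integral_gaussian 1

lemma one_div_two_pi_mul_sqrt_pi : 1 / (2 * π) * √π = 1 / (2 * √π) := by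
  have hπ : √π * √π = π := mul_self_sqrt pi_pos.le
  field_simp
  linarith

lemma errfn_nonneg (z : ℝ) : 0 ≤ errfn z :=
  mul_nonneg (by positivity) (setIntegral_nonneg measurableSet_Iic fun ξ _ => (exp_pos _).le)

lemma errfn_mono : Monotone errfn := fun z w hzw =>
  mul_le_mul_of_nonneg_left
    (setIntegral_mono_set integrable_exp_neg_sq.integrableOn
      (.of_forall fun ξ => (exp_pos _).le) (Iic_subset_Iic.2 hzw).eventuallyLE)
    (by positivity)

lemma errfn_add_errfn_neg (z : ℝ) : errfn z + errfn (-z) = 1 / (2 * √π) := by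
  have h_reflect : ∫ ξ in Iic (-z), exp (-ξ ^ 2) = ∫ ξ in Ioi z, exp (-ξ ^ 2) := by
    rw [← integral_comp_neg_Ioi]
    simp
  rw [errfn, errfn, h_reflect, ← mul_add,
    intervalIntegral.integral_Iic_add_Ioi integrable_exp_neg_sq.integrableOn
      integrable_exp_neg_sq.integrableOn,
    integral_exp_neg_sq, one_div_two_pi_mul_sqrt_pi]

lemma tendsto_errfn_atTop : Tendsto errfn atTop (nhds (1 / (2 * √π))) := by
  have h := ((aecover_Iic tendsto_id).integral_tendsto_of_countably_generated
    integrable_exp_neg_sq).const_mul (1 / (2 * π))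
  rwa [integral_exp_neg_sq, one_div_two_pi_mul_sqrt_pi] at h

lemma tendsto_errfn_atBot : Tendsto errfn atBot (nhds 0) := by
  have h := (tendsto_const_nhds (x := 1 / (2 * √π))).sub
    (tendsto_errfn_atTop.comp tendsto_neg_atBot_atTop)
  rw [sub_self] at h
  refine h.congr fun z => ?_
  simp only [Function.comp_apply]
  linarith [errfn_add_errfn_neg z]

lemma tendsto_add_mul_div_sqrt_mul_atTop {a c : ℝ} (ha : 0 < a) (hc : 0 < c) (y : ℝ) :
    Tendsto (fun t => (y + a * t) / √(c * t)) atTop atTop := by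
  have hsc : 0 < √c := sqrt_pos.2 hc
  have h_split : ∀ᶠ t in atTop, y / (√c * √t) + a / √c * √t = (y + a * t) / √(c * t) := by
    filter_upwards [eventually_gt_atTop 0] with t ht
    have hst : 0 < √t := sqrt_pos.2 ht
    rw [sqrt_mul hc.le]
    field_simp
    rw [sq_sqrt ht.le, mul_comm t]
  refine .congr' h_split (.add_atTop (C := 0) ?_ ?_)
  · exact tendsto_const_nhds.div_atTop (tendsto_sqrt_atTop.const_mul_atTop hsc)
  · exact tendsto_sqrt_atTop.const_mul_atTop (div_pos ha hsc)

lemma tendsto_sub_mul_div_sqrt_mul_atBot {a c : ℝ} (ha : 0 < a) (hc : 0 < c) (y : ℝ) :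
    Tendsto (fun t => (y - a * t) / √(c * t)) atTop atBot := by
  refine (tendsto_neg_atTop_atBot.comp (tendsto_add_mul_div_sqrt_mul_atTop ha hc (-y))).congr
    fun t => ?_
  simp only [Function.comp_apply]
  ring

lemma abs_eKernel_sub_eq (a β y t : ℝ) :
    |eKernel a β y t - 1 / (2 * √π)| =
      errfn (-((y + a * t) / √(4 * β * t))) + errfn ((y - a * t) / √(4 * β * t)) := by
  rw [eKernel, ← errfn_add_errfn_neg ((y + a * t) / √(4 * β * t)), abs_sub_comm]
  ring_nf
  exact abs_of_nonneg (add_nonneg (errfn_nonneg _) (errfn_nonneg _))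

lemma abs_eKernel_sub_le_of_nonpos (a β t : ℝ) {y : ℝ} (hy : y ≤ 0) :
    |eKernel a β y t - 1 / (2 * √π)| ≤ 2 * errfn ((|y| - a * t) / √(4 * β * t)) := by
  have h_plus : -((y + a * t) / √(4 * β * t)) = (|y| - a * t) / √(4 * β * t) := by
    rw [abs_of_nonpos hy]
    ring
  have h_minus : (y - a * t) / √(4 * β * t) ≤ (|y| - a * t) / √(4 * β * t) := by
    gcongr
    exact le_abs_self y
  rw [abs_eKernel_sub_eq, h_plus]
  linarith [errfn_mono h_minus]

lemma sqrt_four_mul_mul {β : ℝ} (hβ : 0 ≤ β) (t : ℝ) : √(4 * β * t) = 2 * √β * √t := by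
  rw [sqrt_mul (by positivity), sqrt_mul (by norm_num), show (4 : ℝ) = 2 ^ 2 by norm_num,
    sqrt_sq (by norm_num)]

/-- Long-time limit of the scattered error-function kernel, with rate quantified by a
retarded error function for `y ≤ 0`, `t ≥ 1`. -/
theorem eKernel_limit (a β : ℝ) (ha : 0 < a) (hβ : 0 < β) :
    (∀ y : ℝ, Tendsto (fun t => eKernel a β y t) atTop (nhds (1 / (2 * Real.sqrt Real.pi)))) ∧
    ∃ C M : ℝ, 0 < C ∧ 0 < M ∧ ∀ y : ℝ, y ≤ 0 → ∀ t : ℝ, 1 ≤ t →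
      |eKernel a β y t - 1 / (2 * Real.sqrt Real.pi)|
        ≤ C * errfn ((|y| - a * t) / (M * Real.sqrt t)) := by
  have h4β : 0 < 4 * β := by positivity
  refine ⟨fun y => ?_, 2, 2 * √β, two_pos, by positivity, fun y hy t _ => ?_⟩
  · have h := (tendsto_errfn_atTop.comp (tendsto_add_mul_div_sqrt_mul_atTop ha h4β y)).sub
      (tendsto_errfn_atBot.comp (tendsto_sub_mul_div_sqrt_mul_atBot ha h4β y))
    rwa [sub_zero] at h
  · rw [← sqrt_four_mul_mul hβ.le]
    exact abs_eKernel_sub_le_of_nonpos a β t hy
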